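/- The Gram operator for the PSC secrecy ensemble is diagonal: with hypothesis-state factors φ_h = Z(y_h) φ for h ∈ F_2^{n-k} (y_h ranging over a complement C^⊤ of C) and φφ† = ρ as above, the operator ΦΦ† = Σ_h φ_h φ_h† = Σ_h Z(y_h) ρ Z(y_h) equals Σ_{v ∈ F_2^n} 2^{n-k} p^{w_H(v)} (1-p)^{n-w_H(v)} |v⟩⟨v|; i.e., averaging the PSC coset state over all cosets of C yields (a scalar multiple of) the diagonal i.i.d. Bernoulli(p) distribution in the computational basis. -/

import Mathlib

/-!
Conjugating by `Z(y)` multiplies the `(v, z)` entry by `(-1)^(y·(v+z))`, and so does `Z(c)`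
inside `ρ`. Summing over `c ∈ C` and `y ∈ C^⊤` therefore sums the character `(-1)^(u·(v+z))`
over all of `u ∈ F_2^n` (as `A` is invertible, `(g, h) ↦ (g, h) A` is a bijection), which
vanishes off the diagonal and equals `2^n` on it. On the diagonal what is left is
`2^{-k} ⟨v|θ^{⊗n}⟩²`, and `cos² (θ/2) = 1 - p`, `sin² (θ/2) = p`.
-/

open Matrix
open scoped Classical

noncomputable section

/-- Hamming weight of a binary vector. -/
def hammingWt {ι : Type*} [Fintype ι] (v : ι → ZMod 2) : ℕ :=
  (Finset.univ.filter fun i => v i ≠ 0).card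

/-- i.i.d. Bernoulli(p) probability of a vector. -/
def bernP (p : ℝ) (n : ℕ) {ι : Type*} [Fintype ι] (v : ι → ZMod 2) : ℝ :=
  p ^ hammingWt v * (1 - p) ^ (n - hammingWt v)

/-- The vector Z(c_g)|θ⟩^{⊗n} (real amplitudes), with c_g = g·G_C and G_C the
top k rows of the invertible matrix A. -/
def pscVec {k m : ℕ} (θ : ℝ) (A : Matrix (Fin k ⊕ Fin m) (Fin k ⊕ Fin m) (ZMod 2))
    (g : Fin k → ZMod 2) : ((Fin k ⊕ Fin m) → ZMod 2) → ℝ := fun v =>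
  (-1 : ℝ) ^ ((dotProduct (Matrix.vecMul g (A.submatrix Sum.inl id)) v).val) *
    ∏ j, (if v j = 0 then Real.cos (θ / 2) else Real.sin (θ / 2))

/-- The averaged PSC coset state ρ = 2^{-k} ∑_{c ∈ C} Z(c)|θ⟩⟨θ|^{⊗n} Z(c). -/
def rhoPSC {k m : ℕ} (θ : ℝ) (A : Matrix (Fin k ⊕ Fin m) (Fin k ⊕ Fin m) (ZMod 2)) :
    Matrix ((Fin k ⊕ Fin m) → ZMod 2) ((Fin k ⊕ Fin m) → ZMod 2) ℝ :=
  ((2 : ℝ) ^ k)⁻¹ •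
    ∑ g : Fin k → ZMod 2, Matrix.vecMulVec (pscVec θ A g) (pscVec θ A g)

/-- The diagonal sign matrix Z(y). -/
def zDiag {k m : ℕ} (y : (Fin k ⊕ Fin m) → ZMod 2) :
    Matrix ((Fin k ⊕ Fin m) → ZMod 2) ((Fin k ⊕ Fin m) → ZMod 2) ℝ :=
  Matrix.diagonal fun v => (-1 : ℝ) ^ ((dotProduct y v).val)

lemma neg_one_pow_val_add (a b : ZMod 2) :
    (-1 : ℝ) ^ (a + b).val = (-1) ^ a.val * (-1) ^ b.val := by
  rw [ZMod.val_add, ← neg_one_pow_eq_pow_mod_two, pow_add]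

lemma sum_neg_one_pow_dotProduct {ι : Type*} [Fintype ι] [DecidableEq ι] (w : ι → ZMod 2) :
    ∑ x : ι → ZMod 2, (-1 : ℝ) ^ (x ⬝ᵥ w).val = if w = 0 then 2 ^ Fintype.card ι else 0 := by
  split_ifs with hw
  · simp [hw]
  obtain ⟨i, hi⟩ : ∃ i, w i ≠ 0 := Function.ne_iff.mp hw
  have hwi : w i = 1 := Fin.eq_one_of_ne_zero (w i) hi
  set f : (ι → ZMod 2) → ℝ := fun x => (-1) ^ (x ⬝ᵥ w).val
  -- translating by the `i`-th unit vector flips every sign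
  have hflip : ∀ x, f (x + Pi.single i 1) = -f x := fun x => by
    simp only [f, add_dotProduct, single_dotProduct, hwi, one_mul, neg_one_pow_val_add,
      ZMod.val_one, pow_one, mul_neg_one]
  have hshift : ∑ x, f (x + Pi.single i 1) = ∑ x, f x :=
    Fintype.sum_equiv (Equiv.addRight (Pi.single i 1)) _ _ fun _ => rfl
  simp only [hflip, Finset.sum_neg_distrib] at hshift
  linarith

lemma sum_vecMul_of_isUnit {R M : Type*} [CommRing R] [Fintype R] [AddCommMonoid M]
    {n : Type*} [Fintype n] [DecidableEq n] {A : Matrix n n R} (hA : IsUnit A)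
    (f : (n → R) → M) : ∑ u, f (u ᵥ* A) = ∑ x, f x :=
  Fintype.sum_bijective _ ⟨vecMul_injective_of_isUnit hA, vecMul_surjective_iff_isUnit.2 hA⟩
    _ _ fun _ => rfl

lemma sum_sumElim_vecMul {R M : Type*} [CommSemiring R] [Fintype R] [AddCommMonoid M]
    {k m n : Type*} [Fintype k] [Fintype m] [DecidableEq k] [DecidableEq m]
    (A : Matrix (k ⊕ m) n R) (f : (n → R) → M) :
    ∑ h : m → R, ∑ g : k → R, f (g ᵥ* A.submatrix Sum.inl id + h ᵥ* A.submatrix Sum.inr id)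
      = ∑ u, f (u ᵥ* A) := by
  rw [Finset.sum_comm, ← Fintype.sum_prod_type',
    ← (Equiv.sumArrowEquivProdArrow k m R).symm.sum_comp]
  refine Fintype.sum_congr _ _ fun u => congrArg f ?_
  ext j
  simp [vecMul, dotProduct, Fintype.sum_sum_type, Equiv.sumArrowEquivProdArrow]

/-- The amplitude `⟨v|θ^{⊗n}⟩` of `|θ⟩ = cos (θ/2) |0⟩ + sin (θ/2) |1⟩`. -/
def pscAmp {ι : Type*} [Fintype ι] (θ : ℝ) (v : ι → ZMod 2) : ℝ :=
  ∏ j, if v j = 0 then Real.cos (θ / 2) else Real.sin (θ / 2)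

lemma pscAmp_sq {ι : Type*} [Fintype ι] (θ : ℝ) (v : ι → ZMod 2) :
    pscAmp θ v ^ 2 = bernP ((1 - Real.cos θ) / 2) (Fintype.card ι) v := by
  have hcos : Real.cos (θ / 2) ^ 2 = 1 - (1 - Real.cos θ) / 2 := by
    rw [Real.cos_sq, mul_div_cancel₀ θ two_ne_zero]; ring
  have hsin : Real.sin (θ / 2) ^ 2 = (1 - Real.cos θ) / 2 := by
    rw [Real.sin_sq, hcos]; ring
  have hcard : (Finset.univ.filter fun j => v j = 0).card = Fintype.card ι - hammingWt v := by
    have := Finset.card_filter_add_card_filter_not (s := Finset.univ) (fun j => v j = 0)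
    have hwt : hammingWt v = (Finset.univ.filter fun j => ¬v j = 0).card := rfl
    rw [Finset.card_univ] at this
    omega
  rw [pscAmp, ← Finset.prod_pow]
  simp only [apply_ite (· ^ 2), hcos, hsin]
  rw [Finset.prod_ite, Finset.prod_const, Finset.prod_const, hcard, bernP, mul_comm]
  rfl

lemma zDiag_mul_mul_zDiag_apply {k m : ℕ} (y : (Fin k ⊕ Fin m) → ZMod 2)
    (M : Matrix ((Fin k ⊕ Fin m) → ZMod 2) ((Fin k ⊕ Fin m) → ZMod 2) ℝ)
    (v z : (Fin k ⊕ Fin m) → ZMod 2) :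
    (zDiag y * M * zDiag y) v z = (-1) ^ (y ⬝ᵥ (v + z)).val * M v z := by
  rw [zDiag, mul_diagonal, diagonal_mul, dotProduct_add, neg_one_pow_val_add]
  ring

lemma rhoPSC_apply {k m : ℕ} (θ : ℝ) (A : Matrix (Fin k ⊕ Fin m) (Fin k ⊕ Fin m) (ZMod 2))
    (v z : (Fin k ⊕ Fin m) → ZMod 2) :
    rhoPSC θ A v z = ((2 : ℝ) ^ k)⁻¹ * (pscAmp θ v * pscAmp θ z) *
      ∑ g : Fin k → ZMod 2, (-1) ^ ((g ᵥ* A.submatrix Sum.inl id) ⬝ᵥ (v + z)).val := by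
  simp only [rhoPSC, Matrix.smul_apply, Matrix.sum_apply, vecMulVec_apply, pscVec, smul_eq_mul,
    Finset.mul_sum, dotProduct_add, neg_one_pow_val_add, pscAmp]
  refine Finset.sum_congr rfl fun g _ => ?_
  ring

theorem psc_gram_operator_diagonal_general (k m : ℕ)
    (A : Matrix (Fin k ⊕ Fin m) (Fin k ⊕ Fin m) (ZMod 2)) (hA : IsUnit A)
    (θ p : ℝ) (hp : p = (1 - Real.cos θ) / 2) :
    ∑ h : Fin m → ZMod 2,
        zDiag (Matrix.vecMul h (A.submatrix Sum.inr id)) * rhoPSC θ A *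
          zDiag (Matrix.vecMul h (A.submatrix Sum.inr id))
      = Matrix.diagonal (fun v => (2 : ℝ) ^ m * bernP p (k + m) v) := by
  ext v z
  calc (∑ h : Fin m → ZMod 2, zDiag (h ᵥ* A.submatrix Sum.inr id) * rhoPSC θ A *
          zDiag (h ᵥ* A.submatrix Sum.inr id)) v z
      = ((2 : ℝ) ^ k)⁻¹ * (pscAmp θ v * pscAmp θ z) *
          ∑ h : Fin m → ZMod 2, ∑ g : Fin k → ZMod 2,
            (-1) ^ ((g ᵥ* A.submatrix Sum.inl id + h ᵥ* A.submatrix Sum.inr id) ⬝ᵥ (v + z)).val :=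
        by
        simp only [Matrix.sum_apply, zDiag_mul_mul_zDiag_apply, rhoPSC_apply, Finset.mul_sum,
          add_dotProduct, neg_one_pow_val_add]
        exact Finset.sum_congr rfl fun h _ => Finset.sum_congr rfl fun g _ => by ring
    _ = ((2 : ℝ) ^ k)⁻¹ * (pscAmp θ v * pscAmp θ z) *
          if v + z = 0 then 2 ^ (k + m) else 0 := by
        rw [sum_sumElim_vecMul A fun x => (-1 : ℝ) ^ (x ⬝ᵥ (v + z)).val,
          sum_vecMul_of_isUnit hA fun x => (-1 : ℝ) ^ (x ⬝ᵥ (v + z)).val,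
          sum_neg_one_pow_dotProduct]
        simp
    _ = diagonal (fun v => (2 : ℝ) ^ m * bernP p (k + m) v) v z := by
        rcases eq_or_ne v z with rfl | hvz
        · rw [ZModModule.add_self, if_pos rfl, diagonal_apply_eq, ← sq, pscAmp_sq, hp,
            Fintype.card_sum, Fintype.card_fin, Fintype.card_fin, pow_add]
          field_simp
        · have hvz' : v + z ≠ 0 := by rwa [Ne, add_eq_zero_iff_eq_neg, ZModModule.neg_eq_self]
          rw [if_neg hvz', diagonal_apply_ne _ hvz, mul_zero]

/-- Averaging the PSC coset state over all cosets of C, via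
conjugation by Z(y_h) for y_h = h G_{C^⊤} ranging over the complement C^⊤,
yields the diagonal i.i.d. Bernoulli(p) distribution scaled by 2^{n-k}:
∑_h Z(y_h) ρ Z(y_h) = diag(2^{n-k} p^{w_H(v)} (1-p)^{n-w_H(v)}). -/
theorem psc_gram_operator_diagonal (k m : ℕ)
    (A : Matrix (Fin k ⊕ Fin m) (Fin k ⊕ Fin m) (ZMod 2)) (hA : IsUnit A)
    (θ p : ℝ) (hθ0 : 0 ≤ θ) (hθ1 : θ ≤ Real.pi / 2)
    (hp : p = (1 - Real.cos θ) / 2) :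
    ∑ h : Fin m → ZMod 2,
        zDiag (Matrix.vecMul h (A.submatrix Sum.inr id)) * rhoPSC θ A *
          zDiag (Matrix.vecMul h (A.submatrix Sum.inr id))
      = Matrix.diagonal (fun v => (2 : ℝ) ^ m * bernP p (k + m) v) :=
  psc_gram_operator_diagonal_general k m A hA θ p hp

end
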